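/- arXiv:math/0311273 — 2 statements merged into one kernel-verified Lean document; each statement's English description precedes it below -/
import Mathlib

section
/- For a Euclidean triangle with inradius r and circumradius R, the condition r/R ≥ f (for some f > 0) holds if and only if the minimal angle of the triangle is bounded below by some angle φ = φ(f) > 0 depending only on f. Concretely: for every f > 0 there exists φ > 0 such that every triangle with r/R ≥ f has all angles ≥ φ, and conversely for every φ > 0 there exists f > 0 such that every triangle with all angles ≥ φ satisfies r/R ≥ f. -/
open EuclideanGeometry Metric Real

noncomputable section

abbrev E2 := EuclideanSpace ℝ (Fin 2)

/-- The inradius of a set: radius of the largest closed ball (relative to the affine span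
of the set) contained in the set. -/
def inradius (s : Set E2) : ℝ :=
  sSup {r : ℝ | 0 ≤ r ∧ ∃ c ∈ affineSpan ℝ s, closedBall c r ∩ (affineSpan ℝ s : Set E2) ⊆ s}

/-- The circumradius of a set: radius of the smallest closed ball containing it. -/
def circumradius (s : Set E2) : ℝ :=
  sInf {r : ℝ | 0 ≤ r ∧ ∃ c, s ⊆ closedBall c r}

/-- A triangle `ABC` is `f`-fat if the ratio inradius/circumradius is at least `f`. -/
def FatTri (f : ℝ) (A B C : E2) : Prop :=
  f ≤ inradius (convexHull ℝ {A, B, C}) / circumradius (convexHull ℝ {A, B, C})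

/-!
Write `D = |ω (B - A) (C - A)|`, with `ω` the area form of an orientation of the plane, for
twice the area of the triangle. A disc of radius `ρ` inside the triangle fits between the line
`AC` and its parallel through `B`, so `2ρ ≤ D / |AC| = |AB| sin A ≤ 2R sin A`; hence
`r / R ≤ sin A ≤ A` at every vertex.

Conversely, if every angle has sine at least `s > 0`, the law of sines gives `(s x)² ≤ D` for
every side `x`. Then the barycentric coordinates stay nonnegative on the disc of radius `s √D / 3`
about the centroid, while the triangle lies in the disc of radius `√D / s` about a vertex, so
`r / R ≥ s² / 3`.
-/

open InnerProductGeometry Module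
open scoped EuclideanSpace RealInnerProductSpace

theorem Real.sin_le_sin_of_le_of_le_pi_sub {ψ θ : ℝ} (hψ₀ : 0 ≤ ψ) (hψ : ψ ≤ π / 2)
    (h₁ : ψ ≤ θ) (h₂ : θ ≤ π - ψ) : sin ψ ≤ sin θ := by
  rcases le_or_gt θ (π / 2) with h | h
  · exact sin_le_sin_of_le_of_le_pi_div_two (by linarith) h h₁
  · rw [← sin_pi_sub θ]
    exact sin_le_sin_of_le_of_le_pi_div_two (by linarith) (by linarith) (by linarith)

theorem LinearMap.mem_uIcc_of_mem_convexHull_triple {E : Type*} [AddCommGroup E] [Module ℝ E]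
    (ℓ : E →ₗ[ℝ] ℝ) {A B C y : E} (hAC : ℓ A = ℓ C) (hy : y ∈ convexHull ℝ {A, B, C}) :
    ℓ y ∈ Set.uIcc (ℓ A) (ℓ B) := by
  have h := Set.mem_image_of_mem ℓ hy
  rwa [ℓ.image_convexHull, Set.image_insert_eq, Set.image_pair, ← hAC, Set.pair_comm,
    Set.insert_idem, convexHull_pair, segment_eq_uIcc] at h

section InnerProductSpace

variable {E : Type*} [NormedAddCommGroup E] [InnerProductSpace ℝ E]

/-- A ball of radius `ρ` inside `s` contains two points `2ρ` apart in the direction of `u`. -/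
theorem two_mul_mul_norm_le_of_closedBall_subset {s : Set E} {c u : E} {ρ M : ℝ} (hρ : 0 ≤ ρ)
    (hs : closedBall c ρ ⊆ s) (hM : ∀ y ∈ s, ∀ z ∈ s, ⟪u, y - z⟫ ≤ M) :
    2 * ρ * ‖u‖ ≤ M := by
  rcases eq_or_ne u 0 with rfl | hu
  · have hc := hs (mem_closedBall_self hρ)
    simpa using hM c hc c hc
  have hu' : 0 < ‖u‖ := norm_pos_iff.mpr hu
  have hmem : ∀ v : E, ‖v‖ = ρ → c + v ∈ s := fun v hv =>
    hs (by rw [mem_closedBall, dist_eq_norm, add_sub_cancel_left, hv])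
  have hv : ‖(ρ / ‖u‖) • u‖ = ρ := by
    rw [norm_smul, norm_div, norm_norm, Real.norm_of_nonneg hρ, div_mul_cancel₀ _ hu'.ne']
  have h := hM _ (hmem _ hv) _ (hmem _ ((norm_neg _).trans hv))
  rw [show c + (ρ / ‖u‖) • u - (c + -((ρ / ‖u‖) • u)) = (2 * (ρ / ‖u‖)) • u by module,
    inner_smul_right, real_inner_self_eq_norm_sq] at h
  convert h using 1
  field_simp

theorem radius_le_of_closedBall_subset_closedBall [Nontrivial E] {c a : E} {ρ R : ℝ}
    (hρ : 0 ≤ ρ) (h : closedBall c ρ ⊆ closedBall a R) : ρ ≤ R := by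
  obtain ⟨u, hu⟩ := exists_norm_eq E zero_le_one
  have := two_mul_mul_norm_le_of_closedBall_subset (M := 2 * R) hρ h fun y hy z hz => by
    calc ⟪u, y - z⟫ ≤ ‖u‖ * ‖y - z‖ := real_inner_le_norm u (y - z)
      _ = dist y z := by rw [hu, one_mul, dist_eq_norm]
      _ ≤ dist y a + dist z a := dist_triangle_right y z a
      _ ≤ 2 * R := by linarith [mem_closedBall.mp hy, mem_closedBall.mp hz]
  rw [hu] at this
  linarith

end InnerProductSpace

section TwoDim

variable {V : Type*} [NormedAddCommGroup V] [InnerProductSpace ℝ V] [Fact (finrank ℝ V = 2)]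

theorem nonempty_orientation : Nonempty (Orientation ℝ V (Fin 2)) :=
  have : FiniteDimensional ℝ V := .of_fact_finrank_eq_two
  ⟨(finBasisOfFinrankEq ℝ V Fact.out).orientation⟩

theorem affineSpan_convexHull_eq_top {A B C : V} (h : ¬Collinear ℝ {A, B, C}) :
    affineSpan ℝ (convexHull ℝ {A, B, C}) = ⊤ := by
  have : FiniteDimensional ℝ V := .of_fact_finrank_eq_two
  have hi := affineIndependent_iff_not_collinear_set.mpr h
  rw [affineSpan_convexHull, ← hi.affineSpan_eq_top_iff_card_eq_finrank_add_one.mpr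
    (by simp [Fact.out]), Matrix.range_cons, Matrix.range_cons_cons_empty, Set.singleton_union]

namespace Orientation

variable (o : Orientation ℝ V (Fin 2))

local notation "ω" => o.areaForm

theorem abs_areaForm_eq_sin_angle_mul (x y : V) :
    |ω x y| = sin (angle x y) * (‖x‖ * ‖y‖) := by
  rw [sin_angle_mul_norm_mul_norm, real_inner_self_eq_norm_sq, real_inner_self_eq_norm_sq,
    ← sqrt_sq_eq_abs]
  congr 1
  linarith [o.inner_sq_add_areaForm_sq x y]

theorem abs_areaForm_sub_eq_sin_angle_mul_dist (A B C : V) :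
    |ω (B - A) (C - A)| = sin (∠ B A C) * (dist A B * dist A C) := by
  rw [o.abs_areaForm_eq_sin_angle_mul, dist_comm A B, dist_comm A C, dist_eq_norm, dist_eq_norm]
  rfl

theorem areaForm_sub_sub_cyclic (A B C : V) : ω (C - B) (A - B) = ω (B - A) (C - A) := by
  simp only [map_sub, LinearMap.sub_apply, o.areaForm_apply_self]
  linear_combination o.areaForm_swap C A - o.areaForm_swap B C

theorem areaForm_add_areaForm_add_areaForm (A B C x : V) :
    ω (B - x) (C - x) + ω (C - x) (A - x) + ω (A - x) (B - x) = ω (B - A) (C - A) := by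
  simp only [map_sub, LinearMap.sub_apply, o.areaForm_apply_self]
  linear_combination o.areaForm_swap A B + o.areaForm_swap C A - o.areaForm_swap C x -
    o.areaForm_swap B x - o.areaForm_swap A x

theorem three_mul_areaForm_sub_centroid (A B C y : V) :
    3 * ω (B - y) (C - y) =
      ω (B - A) (C - A) + 3 * ω (y - (3 : ℝ)⁻¹ • (A + B + C)) (B - C) := by
  simp only [map_sub, map_add, map_smul, LinearMap.sub_apply, LinearMap.add_apply,
    LinearMap.smul_apply, smul_eq_mul, o.areaForm_apply_self]
  linear_combination o.areaForm_swap A B + o.areaForm_swap B C - 3 * o.areaForm_swap B y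

/-- Cramer's rule. -/
theorem areaForm_smul_eq_add {u w : V} (h : ω u w ≠ 0) (v : V) :
    ω u w • v = ω v w • u + ω u v • w := by
  set z := ω u w • v - ω v w • u - ω u v • w
  have hzw : ω z w = 0 := by
    simp only [z, map_sub, map_smul, LinearMap.sub_apply, LinearMap.smul_apply, smul_eq_mul,
      o.areaForm_apply_self]
    ring
  have huz : ω u z = 0 := by
    simp only [z, map_sub, map_smul, o.areaForm_apply_self, smul_eq_mul]
    ring
  -- `z` is killed by `ω · w` and by `ω u ·`, which is impossible for `z ≠ 0` when `ω u w ≠ 0`.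
  have hz : ‖z‖ ^ 2 * ω u w = 0 := by
    rw [← o.inner_mul_areaForm_sub z u w, hzw, o.areaForm_swap z u, huz]
    ring
  have : z = 0 := by simpa [h] using hz
  rw [← sub_eq_zero, ← sub_sub]
  exact this

/-- The barycentric coordinates of `x` with respect to `A, B, C`, scaled by `ω (B - A) (C - A)`. -/
theorem areaForm_smul_eq_barycentric (A B C x : V) (hD : ω (B - A) (C - A) ≠ 0) :
    ω (B - A) (C - A) • x =
      ω (B - x) (C - x) • A + ω (C - x) (A - x) • B + ω (A - x) (B - x) • C := by
  have h := o.areaForm_smul_eq_add hD (x - A)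
  rw [← o.areaForm_sub_sub_cyclic A x C, ← o.areaForm_sub_sub_cyclic A B x,
    ← o.areaForm_sub_sub_cyclic B x A] at h
  rw [← o.areaForm_add_areaForm_add_areaForm A B C x] at h ⊢
  linear_combination (norm := module) h

theorem mem_convexHull_of_areaForm_nonneg {A B C x : V} (hD : 0 < ω (B - A) (C - A))
    (hA : 0 ≤ ω (B - x) (C - x)) (hB : 0 ≤ ω (C - x) (A - x)) (hC : 0 ≤ ω (A - x) (B - x)) :
    x ∈ convexHull ℝ {A, B, C} := by
  have hsum := o.areaForm_add_areaForm_add_areaForm A B C x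
  have hx : Finset.univ.centerMass ![ω (B - x) (C - x), ω (C - x) (A - x), ω (A - x) (B - x)]
      ![A, B, C] = x := by
    simp only [Finset.centerMass, Fin.sum_univ_three, Matrix.cons_val_zero, Matrix.cons_val_one,
      Matrix.cons_val_two, Matrix.head_cons, Matrix.tail_cons]
    rw [hsum, ← o.areaForm_smul_eq_barycentric A B C x hD.ne', smul_smul,
      inv_mul_cancel₀ hD.ne', one_smul]
  rw [← hx]
  refine Finset.centerMass_mem_convexHull _ (fun i _ => ?_) ?_ (fun i _ => ?_)
  · fin_cases i <;> assumption
  · simp only [Fin.sum_univ_three, Matrix.cons_val_zero, Matrix.cons_val_one,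
      Matrix.cons_val_two, Matrix.head_cons, Matrix.tail_cons]
    rwa [hsum]
  · fin_cases i <;> simp

theorem areaForm_nonneg_of_mem_closedBall_centroid {A B C y : V} {ρ : ℝ}
    (hy : y ∈ closedBall ((3 : ℝ)⁻¹ • (A + B + C)) ρ)
    (h : 3 * ρ * ‖B - C‖ ≤ ω (B - A) (C - A)) : 0 ≤ ω (B - y) (C - y) := by
  have hle : |ω (y - (3 : ℝ)⁻¹ • (A + B + C)) (B - C)| ≤ ρ * ‖B - C‖ :=
    (o.abs_areaForm_le _ _).trans
      (mul_le_mul_of_nonneg_right (mem_closedBall_iff_norm.mp hy) (norm_nonneg _))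
  linarith [o.three_mul_areaForm_sub_centroid A B C y,
    neg_abs_le (ω (y - (3 : ℝ)⁻¹ • (A + B + C)) (B - C))]

theorem closedBall_centroid_subset_convexHull {A B C : V} {ρ : ℝ} (hD : 0 < ω (B - A) (C - A))
    (ha : 3 * ρ * ‖B - C‖ ≤ ω (B - A) (C - A)) (hb : 3 * ρ * ‖C - A‖ ≤ ω (B - A) (C - A))
    (hc : 3 * ρ * ‖A - B‖ ≤ ω (B - A) (C - A)) :
    closedBall ((3 : ℝ)⁻¹ • (A + B + C)) ρ ⊆ convexHull ℝ {A, B, C} := by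
  intro y hy
  have hD₁ := o.areaForm_sub_sub_cyclic A B C
  have hD₂ := o.areaForm_sub_sub_cyclic B C A
  refine o.mem_convexHull_of_areaForm_nonneg hD
    (o.areaForm_nonneg_of_mem_closedBall_centroid hy ha)
    (o.areaForm_nonneg_of_mem_closedBall_centroid (A := B) (B := C) (C := A) ?_ (by rwa [hD₁]))
    (o.areaForm_nonneg_of_mem_closedBall_centroid (A := C) (B := A) (C := B) ?_
      (by rwa [hD₂, hD₁]))
  all_goals convert hy using 3; abel

theorem sq_mul_dist_le_abs_areaForm {A B C : V} {s : ℝ} (hs : 0 ≤ s)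
    (hB : s ≤ sin (∠ A B C)) (hC : s ≤ sin (∠ A C B)) :
    (s * dist B C) ^ 2 ≤ |ω (B - A) (C - A)| := by
  have hsine := sin_angle_mul_dist_eq_sin_angle_mul_dist A B C
  have hAC : s * dist B C ≤ dist C A := by
    nlinarith [sin_le_one (∠ C A B), dist_nonneg (x := C) (y := A), dist_nonneg (x := B) (y := C)]
  have := sin_nonneg_of_nonneg_of_le_pi (angle_nonneg A C B) (angle_le_pi A C B)
  rw [← o.areaForm_sub_sub_cyclic A B C, ← o.areaForm_sub_sub_cyclic B C A,
    o.abs_areaForm_sub_eq_sin_angle_mul_dist, dist_comm C B]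
  calc (s * dist B C) ^ 2 = s * (s * dist B C) * dist B C := by ring
    _ ≤ sin (∠ A C B) * dist C A * dist B C := by gcongr
    _ = sin (∠ A C B) * (dist C A * dist B C) := by ring

theorem sq_mul_dist_le_abs_areaForm_of_le_sin {A B C : V} {s : ℝ} (hs : 0 ≤ s)
    (hA : s ≤ sin (∠ B A C)) (hB : s ≤ sin (∠ A B C)) (hC : s ≤ sin (∠ A C B)) :
    (s * dist B C) ^ 2 ≤ |ω (B - A) (C - A)| ∧ (s * dist C A) ^ 2 ≤ |ω (B - A) (C - A)| ∧
      (s * dist A B) ^ 2 ≤ |ω (B - A) (C - A)| := by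
  refine ⟨o.sq_mul_dist_le_abs_areaForm hs hB hC, ?_, ?_⟩
  · rw [← o.areaForm_sub_sub_cyclic A B C]
    exact o.sq_mul_dist_le_abs_areaForm hs (by rwa [EuclideanGeometry.angle_comm]) hA
  · rw [← o.areaForm_sub_sub_cyclic A B C, ← o.areaForm_sub_sub_cyclic B C A]
    exact o.sq_mul_dist_le_abs_areaForm hs (by rwa [EuclideanGeometry.angle_comm])
      (by rwa [EuclideanGeometry.angle_comm])

end Orientation

theorem exists_orientation_areaForm_pos {A B C : V} (h : ¬Collinear ℝ {A, B, C}) :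
    ∃ o : Orientation ℝ V (Fin 2), 0 < o.areaForm (B - A) (C - A) := by
  obtain ⟨o⟩ := nonempty_orientation (V := V)
  have hpos : 0 < |o.areaForm (B - A) (C - A)| := by
    rw [o.abs_areaForm_sub_eq_sin_angle_mul_dist]
    have := sin_pos_of_not_collinear (p₁ := B) (p₂ := A) (p₃ := C) (by rwa [Set.insert_comm])
    have := dist_pos.mpr (ne₁₂_of_not_collinear h)
    have := dist_pos.mpr (ne₁₃_of_not_collinear h)
    positivity
  rcases lt_or_gt_of_ne (abs_pos.mp hpos) with hneg | hpos
  · exact ⟨-o, by simpa [o.areaForm_neg_orientation] using hneg⟩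
  · exact ⟨o, hpos⟩

theorem two_mul_le_sin_angle_mul_dist {A B C c : V} {ρ : ℝ} (hAC : A ≠ C) (hρ : 0 ≤ ρ)
    (hs : closedBall c ρ ⊆ convexHull ℝ {A, B, C}) : 2 * ρ ≤ sin (∠ B A C) * dist A B := by
  obtain ⟨o⟩ := nonempty_orientation (V := V)
  have hstrip : ∀ y ∈ convexHull ℝ {A, B, C}, ∀ z ∈ convexHull ℝ {A, B, C},
      ⟪o.rightAngleRotation (C - A), y - z⟫ ≤ |o.areaForm (B - A) (C - A)| := by
    intro y hy z hz
    have hl : o.areaForm (C - A) A = o.areaForm (C - A) C := by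
      rw [eq_comm, ← sub_eq_zero, ← map_sub, o.areaForm_apply_self]
    have := Set.abs_sub_le_of_uIcc_subset_uIcc <| Set.uIcc_subset_uIcc
      ((o.areaForm (C - A)).mem_uIcc_of_mem_convexHull_triple hl hz)
      ((o.areaForm (C - A)).mem_uIcc_of_mem_convexHull_triple hl hy)
    rw [o.inner_rightAngleRotation_left, (o.areaForm (C - A)).map_sub, o.areaForm_swap (B - A),
      abs_neg, (o.areaForm (C - A)).map_sub]
    exact (le_abs_self _).trans this
  have h := two_mul_mul_norm_le_of_closedBall_subset hρ hs hstrip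
  rw [LinearIsometryEquiv.norm_map, o.abs_areaForm_sub_eq_sin_angle_mul_dist, ← mul_assoc,
    dist_comm A C, dist_eq_norm C A] at h
  exact le_of_mul_le_mul_right h (norm_pos_iff.mpr (sub_ne_zero.mpr hAC.symm))

end TwoDim

theorem inradius_eq_sSup {s : Set E2} (hs : affineSpan ℝ s = ⊤) :
    inradius s = sSup {r : ℝ | 0 ≤ r ∧ ∃ c, closedBall c r ⊆ s} := by
  simp [inradius, hs]

theorem inradius_le {s : Set E2} {M : ℝ} (hs : affineSpan ℝ s = ⊤) (hne : s.Nonempty)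
    (h : ∀ c ρ, 0 ≤ ρ → closedBall c ρ ⊆ s → ρ ≤ M) : inradius s ≤ M := by
  obtain ⟨a, ha⟩ := hne
  rw [inradius_eq_sSup hs]
  exact csSup_le ⟨0, le_rfl, a, by simpa using ha⟩ fun r ⟨hr, c, hc⟩ => h c r hr hc

theorem le_inradius {s : Set E2} {c : E2} {ρ : ℝ} (hs : affineSpan ℝ s = ⊤)
    (hb : Bornology.IsBounded s) (hρ : 0 ≤ ρ) (hc : closedBall c ρ ⊆ s) : ρ ≤ inradius s := by
  obtain ⟨R, -, hR⟩ := hb.subset_closedBall_lt 0 c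
  rw [inradius_eq_sSup hs]
  exact le_csSup ⟨R, fun r ⟨hr, c', hc'⟩ => radius_le_of_closedBall_subset_closedBall hr
    (hc'.trans hR)⟩ ⟨hρ, c, hc⟩

theorem circumradius_le {s : Set E2} {a : E2} {R : ℝ} (hR : 0 ≤ R) (h : s ⊆ closedBall a R) :
    circumradius s ≤ R :=
  csInf_le ⟨0, fun _ hr => hr.1⟩ ⟨hR, a, h⟩

theorem dist_le_two_mul_circumradius {s : Set E2} (hb : Bornology.IsBounded s) {x y : E2}
    (hx : x ∈ s) (hy : y ∈ s) : dist x y ≤ 2 * circumradius s := by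
  obtain ⟨R, hR, hsR⟩ := hb.subset_closedBall_lt 0 x
  have : dist x y / 2 ≤ circumradius s := by
    refine le_csInf ⟨R, hR.le, x, hsR⟩ fun r ⟨_, a, ha⟩ => ?_
    linarith [dist_triangle_right x y a, mem_closedBall.mp (ha hx), mem_closedBall.mp (ha hy)]
  linarith

theorem isBounded_convexHull_triple (A B C : E2) :
    Bornology.IsBounded (convexHull ℝ {A, B, C}) :=
  isBounded_convexHull.mpr (Set.toFinite _).isBounded

theorem circumradius_convexHull_le {A B C : E2} {L : ℝ} (hB : dist A B ≤ L) (hC : dist A C ≤ L) :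
    circumradius (convexHull ℝ {A, B, C}) ≤ L := by
  refine circumradius_le (dist_nonneg.trans hB) (convexHull_min ?_ (convex_closedBall A L))
  simp only [Set.insert_subset_iff, Set.singleton_subset_iff, mem_closedBall, dist_self,
    dist_comm _ A]
  exact ⟨dist_nonneg.trans hB, hB, hC⟩

theorem circumradius_convexHull_pos {A B C : E2} (h : A ≠ B) :
    0 < circumradius (convexHull ℝ {A, B, C}) := by
  have := dist_le_two_mul_circumradius (isBounded_convexHull_triple A B C)
    (subset_convexHull ℝ _ (Set.mem_insert A _))
    (subset_convexHull ℝ _ (Set.mem_insert_of_mem A (Set.mem_insert B _)))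
  linarith [dist_pos.mpr h]

theorem inradius_le_sin_angle_mul_circumradius {A B C : E2} (h : ¬Collinear ℝ {A, B, C}) :
    inradius (convexHull ℝ {A, B, C}) ≤ sin (∠ B A C) * circumradius (convexHull ℝ {A, B, C}) := by
  have hAB := dist_le_two_mul_circumradius (isBounded_convexHull_triple A B C)
    (subset_convexHull ℝ _ (Set.mem_insert A _))
    (subset_convexHull ℝ _ (Set.mem_insert_of_mem A (Set.mem_insert B _)))
  refine inradius_le (affineSpan_convexHull_eq_top h)
    ⟨A, subset_convexHull ℝ _ (Set.mem_insert A _)⟩ fun c ρ hρ hc => ?_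
  have := two_mul_le_sin_angle_mul_dist (ne₁₃_of_not_collinear h) hρ hc
  nlinarith [sin_nonneg_of_nonneg_of_le_pi (angle_nonneg B A C) (angle_le_pi B A C)]

theorem le_angle_of_fatTri {f : ℝ} {A B C : E2} (h : ¬Collinear ℝ {A, B, C})
    (hf : FatTri f A B C) : f ≤ ∠ B A C := by
  have hR := circumradius_convexHull_pos (C := C) (ne₁₂_of_not_collinear h)
  calc f ≤ inradius (convexHull ℝ {A, B, C}) / circumradius (convexHull ℝ {A, B, C}) := hf
    _ ≤ sin (∠ B A C) := (div_le_iff₀ hR).mpr (inradius_le_sin_angle_mul_circumradius h)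
    _ ≤ ∠ B A C := sin_le (angle_nonneg B A C)

theorem fatTri_of_le_sin_angle {A B C : E2} {s : ℝ} (h : ¬Collinear ℝ {A, B, C}) (hs : 0 < s)
    (hA : s ≤ sin (∠ B A C)) (hB : s ≤ sin (∠ A B C)) (hC : s ≤ sin (∠ A C B)) :
    FatTri (s ^ 2 / 3) A B C := by
  obtain ⟨o, hD⟩ := exists_orientation_areaForm_pos h
  obtain ⟨ha, hb, hc⟩ := o.sq_mul_dist_le_abs_areaForm_of_le_sin hs.le hA hB hC
  set D := o.areaForm (B - A) (C - A)
  rw [abs_of_pos hD] at ha hb hc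
  set q := √D
  have hq : 0 < q := sqrt_pos.mpr hD
  have hqq : q * q = D := mul_self_sqrt hD.le
  have side : ∀ {x : ℝ}, 0 ≤ x → (s * x) ^ 2 ≤ D → x ≤ q / s := fun hx h => by
    rw [le_div_iff₀ hs, mul_comm]
    exact (le_sqrt (by positivity) hD.le).mpr h
  replace ha := side dist_nonneg ha
  replace hb := side dist_nonneg hb
  replace hc := side dist_nonneg hc
  have hball : ∀ x, x ≤ q / s → 3 * (s * q / 3) * x ≤ D := fun x hx => by
    rw [le_div_iff₀ hs] at hx
    nlinarith
  have hr : s * q / 3 ≤ inradius (convexHull ℝ {A, B, C}) :=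
    le_inradius (affineSpan_convexHull_eq_top h) (isBounded_convexHull_triple A B C)
      (by positivity) (o.closedBall_centroid_subset_convexHull hD
        (by rw [← dist_eq_norm]; exact hball _ ha) (by rw [← dist_eq_norm]; exact hball _ hb)
        (by rw [← dist_eq_norm]; exact hball _ hc))
  have hR : circumradius (convexHull ℝ {A, B, C}) ≤ q / s :=
    circumradius_convexHull_le hc (by rwa [dist_comm])
  rw [FatTri, le_div_iff₀ (circumradius_convexHull_pos (ne₁₂_of_not_collinear h))]
  calc s ^ 2 / 3 * circumradius (convexHull ℝ {A, B, C}) ≤ s ^ 2 / 3 * (q / s) := by gcongr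
    _ = s * q / 3 := by field_simp
    _ ≤ _ := hr

/-- For Euclidean triangles, fatness `r/R ≥ f` is equivalent to a uniform lower bound on the
minimal angle: for every `f > 0` there is `φ > 0` such that every `f`-fat triangle has all
angles `≥ φ`, and conversely for every `φ > 0` there is `f > 0` such that every triangle with
all angles `≥ φ` is `f`-fat. -/
theorem fatness_iff_angle_bound :
    (∀ f : ℝ, 0 < f → ∃ φ > 0, ∀ A B C : E2, AffineIndependent ℝ ![A, B, C] →
      FatTri f A B C → φ ≤ ∠ B A C ∧ φ ≤ ∠ A B C ∧ φ ≤ ∠ A C B) ∧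
    (∀ φ : ℝ, 0 < φ → ∃ f > 0, ∀ A B C : E2, AffineIndependent ℝ ![A, B, C] →
      (φ ≤ ∠ B A C ∧ φ ≤ ∠ A B C ∧ φ ≤ ∠ A C B) → FatTri f A B C) := by
  have hBAC : ∀ A B C : E2, ({B, A, C} : Set E2) = {A, B, C} := fun A B C =>
    Set.insert_comm B A {C}
  have hCAB : ∀ A B C : E2, ({C, A, B} : Set E2) = {A, B, C} := fun A B C => by
    rw [Set.insert_comm, Set.pair_comm]
  constructor
  · refine fun f hf => ⟨f, hf, fun A B C hi hfat => ?_⟩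
    rw [affineIndependent_iff_not_collinear_set] at hi
    exact ⟨le_angle_of_fatTri hi hfat,
      le_angle_of_fatTri (by rwa [hBAC]) (by rwa [FatTri, hBAC]),
      le_angle_of_fatTri (by rwa [hCAB]) (by rwa [FatTri, hCAB])⟩
  · intro φ hφ
    set ψ := min φ (π / 2)
    have hψ : 0 < ψ := lt_min hφ (by positivity)
    have hsψ : 0 < sin ψ :=
      sin_pos_of_pos_of_lt_pi hψ (by linarith [min_le_right φ (π / 2), pi_pos])
    refine ⟨sin ψ ^ 2 / 3, by positivity, fun A B C hi ⟨hA, hB, hC⟩ => ?_⟩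
    rw [affineIndependent_iff_not_collinear_set] at hi
    have hsum := angle_add_angle_add_angle_eq_pi C (ne₁₂_of_not_collinear hi).symm
    rw [EuclideanGeometry.angle_comm B C A, EuclideanGeometry.angle_comm C A B] at hsum
    have key : ∀ θ, φ ≤ θ → θ ≤ π - φ → sin ψ ≤ sin θ := fun θ h₁ h₂ =>
      sin_le_sin_of_le_of_le_pi_sub hψ.le (min_le_right _ _) ((min_le_left _ _).trans h₁)
        (h₂.trans (by linarith [min_le_left φ (π / 2)]))
    exact fatTri_of_le_sin_angle hi hsψ (key _ hA (by linarith)) (key _ hB (by linarith))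
      (key _ hC (by linarith))
end
end

section
/- Let X be a metric space and Γ < Isom(X) a discontinuous group of isometries. Fix x ∈ X, let Γ_x be the stabilizer of x in Γ, and set δ = d(x, Γ(x) \ {x}) (the distance from x to the rest of its orbit). Equip X/Γ with the metric d_Γ([π(x)], [π(y)]) = d(Γ(x), Γ(y)). Then for any r ∈ (0, δ/4), the natural projection induces an isometry between B(x, r)/Γ_x and the ball B(π(x), r) in X/Γ. -/
open Metric

noncomputable section

/-- Let `Γ` be a discontinuous group of isometries of a metric space `X`, let `x ∈ X`, and let
`δ = d(x, Γ(x) \ {x})`.  The quotient `X/Γ` carries the distance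
`d_Γ([a],[b]) = d(Γ(a), Γ(b)) = inf_{γ ∈ Γ} d(γ a, b)`, and the quotient of the ball `B(x, r)`
by the stabiliser `Γ_x` carries the analogous distance `inf_{γ ∈ Γ_x} d(γ a, b)`.  Then for any
`r ∈ (0, δ/4)` the natural projection `B(x, r)/Γ_x → B(π(x), r) ⊆ X/Γ` is an isometry:
the two distances agree on `B(x, r)`, and every point of the ball `B(π(x), r)` in `X/Γ` is the
image of a point of `B(x, r)`. -/
theorem quotient_ball_isometry (X : Type*) [MetricSpace X] (Γ : Subgroup (X ≃ᵢ X))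
    (hdisc : ∀ K : Set X, IsCompact K →
      {γ : X ≃ᵢ X | γ ∈ Γ ∧ ((γ '' K) ∩ K).Nonempty}.Finite)
    (x : X) (r : ℝ) (hr : 0 < r)
    (hrδ : r < sInf {d : ℝ | ∃ γ ∈ Γ, γ x ≠ x ∧ d = dist x (γ x)} / 4) :
    (∀ a b : X, dist x a < r → dist x b < r →
      (⨅ γ : Γ, dist ((γ : X ≃ᵢ X) a) b)
        = ⨅ γ : {γ : X ≃ᵢ X // γ ∈ Γ ∧ γ x = x}, dist ((γ : X ≃ᵢ X) a) b) ∧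
    (∀ y : X, (⨅ γ : Γ, dist ((γ : X ≃ᵢ X) x) y) < r → ∃ γ ∈ Γ, dist x (γ y) < r) := by
  have key : ∀ γ : X ≃ᵢ X, γ ∈ Γ → γ x ≠ x → 4 * r < dist x (γ x) := by
    intro γ hγ hne
    have hbdd : BddBelow {d : ℝ | ∃ γ ∈ Γ, γ x ≠ x ∧ d = dist x (γ x)} := by
      refine ⟨0, ?_⟩
      rintro d ⟨γ', _, _, rfl⟩
      exact dist_nonneg
    have hmem : dist x (γ x) ∈ {d : ℝ | ∃ γ ∈ Γ, γ x ≠ x ∧ d = dist x (γ x)} :=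
      ⟨γ, hγ, hne, rfl⟩
    have := csInf_le hbdd hmem
    linarith
  constructor
  · intro a b ha hb
    have hbdd1 : BddBelow (Set.range fun γ : Γ => dist ((γ : X ≃ᵢ X) a) b) := by
      refine ⟨0, ?_⟩
      rintro d ⟨γ, rfl⟩
      exact dist_nonneg
    have hbdd2 : BddBelow (Set.range fun γ : {γ : X ≃ᵢ X // γ ∈ Γ ∧ γ x = x} =>
        dist ((γ : X ≃ᵢ X) a) b) := by
      refine ⟨0, ?_⟩
      rintro d ⟨γ, rfl⟩
      exact dist_nonneg
    haveI : Nonempty {γ : X ≃ᵢ X // γ ∈ Γ ∧ γ x = x} := ⟨⟨1, Γ.one_mem, rfl⟩⟩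
    apply le_antisymm
    · refine le_ciInf fun γ => ?_
      exact ciInf_le_of_le hbdd1 ⟨γ.1, γ.2.1⟩ le_rfl
    · refine le_ciInf fun γ => ?_
      by_cases hfix : (γ : X ≃ᵢ X) x = x
      · exact ciInf_le_of_le hbdd2 ⟨γ.1, γ.2, hfix⟩ le_rfl
      · have h1 : 4 * r < dist x ((γ : X ≃ᵢ X) x) := key γ.1 γ.2 hfix
        have h2 : dist ((γ : X ≃ᵢ X) a) ((γ : X ≃ᵢ X) x) = dist a x :=
          (γ : X ≃ᵢ X).dist_eq a x
        have h3 : dist x ((γ : X ≃ᵢ X) x) ≤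
            dist x b + dist b ((γ : X ≃ᵢ X) a) + dist ((γ : X ≃ᵢ X) a) ((γ : X ≃ᵢ X) x) :=
          dist_triangle4 _ _ _ _
        have h4 : dist a b ≤ dist a x + dist x b := dist_triangle _ _ _
        have h5 : (⨅ γ : {γ : X ≃ᵢ X // γ ∈ Γ ∧ γ x = x}, dist ((γ : X ≃ᵢ X) a) b)
            ≤ dist a b := by
          refine ciInf_le_of_le hbdd2 ⟨1, Γ.one_mem, rfl⟩ ?_
          simp
        have hax : dist a x = dist x a := dist_comm a x
        have hba : dist b ((γ : X ≃ᵢ X) a) = dist ((γ : X ≃ᵢ X) a) b := dist_comm _ _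
        linarith
  · intro y hy
    obtain ⟨γ, hγ⟩ := exists_lt_of_ciInf_lt hy
    refine ⟨(γ : X ≃ᵢ X)⁻¹, Γ.inv_mem γ.2, ?_⟩
    have h : dist ((γ : X ≃ᵢ X) x) ((γ : X ≃ᵢ X) ((γ : X ≃ᵢ X)⁻¹ y)) =
        dist x ((γ : X ≃ᵢ X)⁻¹ y) := (γ : X ≃ᵢ X).dist_eq _ _
    have h2 : (γ : X ≃ᵢ X) ((γ : X ≃ᵢ X)⁻¹ y) = y := by
      simp
    rw [← h, h2]
    exact hγ
end
end
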